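/- arXiv:2210.16281 — 2 statements merged into one kernel-verified Lean document; each statement's English description precedes it below -/
import Mathlib

section
/- Let G be a terrain-like graph on [n] and let {a,b} with a < b be a ⪯-minimal edge of G. Then the graph G' obtained from G by deleting {a,b} is terrain-like, and Π(G) = (2a, 2b-1)∘Π(G'). -/
/-- A graph on vertex set `[n]` (vertices `Fin n` in increasing order) is terrain-like
if it satisfies the X-property. -/
def TerrainLike {n : ℕ} (G : SimpleGraph (Fin n)) : Prop :=
  ∀ a b c d : Fin n, a < b → b < c → c < d → G.Adj a c → G.Adj b d → G.Adj a d

/-- The order `⪯` on pairs `(a,b)` with `a < b`: `{a,b} ⪯ {c,d}` iff `c ≤ a < b ≤ d`. -/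
def PairLE {n : ℕ} (e f : Fin n × Fin n) : Prop :=
  f.1 ≤ e.1 ∧ e.2 ≤ f.2

/-- `τ({a,b})` is the transposition `(2a, 2b-1)` of `[2n]`; here vertices and the
elements of `[2n]` are 0-indexed, so it swaps the 0-based positions `2a+1` and `2b`. -/
def tau {n : ℕ} (e : Fin n × Fin n) : Equiv.Perm (Fin (2 * n)) :=
  Equiv.swap ⟨2 * e.1.val + 1, by have := e.1.isLt; omega⟩
    ⟨2 * e.2.val, by have := e.2.isLt; omega⟩

/-- `π₀ = (1,2)(3,4)⋯(2n-1,2n)` (0-indexed: swaps `2i` and `2i+1` for each `i < n`). -/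
def pi0 (n : ℕ) : Equiv.Perm (Fin (2 * n)) :=
  (List.ofFn (fun i : Fin n =>
    Equiv.swap ⟨2 * i.val, by have := i.isLt; omega⟩
      ⟨2 * i.val + 1, by have := i.isLt; omega⟩)).prod

/-- Dumont derangements of the second kind, on `Fin (2*n)` (0-indexed version of `[2n]`):
`π(2i-1) ≥ 2i-1`, `π(2i) < 2i` for `i ∈ [n]`, and `π(2i-1) > 2i-1` for `i ∈ [n-1]`. -/
def IsDumontDerangement {n : ℕ} (π : Equiv.Perm (Fin (2 * n))) : Prop :=
  (∀ i : Fin (2 * n), i.val % 2 = 0 → i.val ≤ (π i).val) ∧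
  (∀ i : Fin (2 * n), i.val % 2 = 1 → (π i).val < i.val) ∧
  (∀ i : Fin (2 * n), i.val % 2 = 0 → i.val < 2 * n - 2 → i.val < (π i).val)

/-- `i` and `j` are in edge configuration in `π` iff
`π⁻¹(i) < π⁻¹(j) ⟺ π⁻¹(i) ≡ π⁻¹(j) (mod 2)`. -/
def EdgeConfig {m : ℕ} (π : Equiv.Perm (Fin m)) (i j : Fin m) : Prop :=
  (π.symm i).val < (π.symm j).val ↔ (π.symm i).val % 2 = (π.symm j).val % 2

/-- A list `e₁ > ⋯ > e_m` of the edges of `G` (as pairs `(a,b)`, `a < b`), ordered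
descendingly with respect to a valid linear order (one extending `⪯`): no earlier
element is `⪯`-below a later one. -/
def ValidEdgeList {n : ℕ} (G : SimpleGraph (Fin n)) (l : List (Fin n × Fin n)) : Prop :=
  l.Nodup ∧ (∀ e : Fin n × Fin n, e ∈ l ↔ (e.1 < e.2 ∧ G.Adj e.1 e.2)) ∧
  l.Pairwise (fun e f => ¬ PairLE e f)

/-- `Π(G) = τ(e_m)⋯τ(e₁)π₀` for an edge list `[e₁,…,e_m]`. -/
def permOfList {n : ℕ} (l : List (Fin n × Fin n)) : Equiv.Perm (Fin (2 * n)) :=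
  (l.reverse.map tau).prod * pi0 n

/-!
Two `⪯`-incomparable edges give disjoint, hence commuting, transpositions, so `Π(G)` does not
depend on the valid ordering. Listing the edges of `G'` in a valid order and appending the
`⪯`-minimal edge `{a,b}` gives a valid order for `G`, which yields the factorisation. An
X-configuration of `G'` whose long edge `{w,z}` is `{a,b}` is impossible, because its edge
`{x,z}` would be an edge of `G` strictly `⪯`-below `{a,b}`.
-/

theorem commute_tau_of_not_pairLE {n : ℕ} {e f : Fin n × Fin n}
    (hef : ¬ PairLE e f) (hfe : ¬ PairLE f e) : Commute (tau e) (tau f) := by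
  refine (Equiv.Perm.disjoint_swap_swap ?_).commute
  simp only [PairLE, Fin.le_def, not_and_or, not_le] at hef hfe
  simp [Fin.ext_iff]
  omega

theorem List.prod_map_eq_of_perm_of_pairwise {α M : Type*} [Monoid M] {f : α → M}
    {R : α → α → Prop} (hR : ∀ x y, R x y → R y x → Commute (f x) (f y)) :
    ∀ {l₁ l₂ : List α}, l₁.Perm l₂ → l₁.Pairwise R → l₂.Pairwise R →
      (l₁.map f).prod = (l₂.map f).prod
  | [], _, hp, _, _ => by rw [← hp.nil_eq]
  | e :: t, l₂, hp, h₁, h₂ => by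
    obtain ⟨u, v, rfl⟩ := List.append_of_mem (hp.subset List.mem_cons_self)
    have ht : t.Perm (u ++ v) := (hp.trans List.perm_middle).cons_inv
    rw [List.pairwise_cons] at h₁
    have hcomm : Commute (f e) (u.map f).prod := by
      refine Commute.list_prod_right _ _ fun y hy => ?_
      obtain ⟨x, hx, rfl⟩ := List.mem_map.mp hy
      by_cases hxe : x = e
      · exact hxe ▸ Commute.refl _
      · have hxt : x ∈ t := ht.symm.subset (List.mem_append_left v hx)
        exact hR e x (h₁.1 x hxt) ((List.pairwise_append.mp h₂).2.2 x hx e List.mem_cons_self)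
    have ih := prod_map_eq_of_perm_of_pairwise hR ht h₁.2
      (h₂.sublist ((List.sublist_cons_self e v).append_left u))
    simp only [List.map_cons, List.prod_cons, ih, List.map_append, List.prod_append]
    rw [← mul_assoc, hcomm.eq, mul_assoc]

theorem SimpleGraph.deleteEdges_singleton_adj_of_lt {α : Type*} [LinearOrder α]
    {G : SimpleGraph α} {a b u v : α} (hab : a < b) (huv : u < v) :
    (G.deleteEdges {s(a, b)}).Adj u v ↔ G.Adj u v ∧ (u, v) ≠ (a, b) := by
  have : ¬ (u = b ∧ v = a) := fun ⟨hu, hv⟩ => (hu ▸ hv ▸ huv).asymm hab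
  simp [Prod.ext_iff, this]

open SimpleGraph in
theorem TerrainLike.deleteEdges_of_minimal {n : ℕ} {G : SimpleGraph (Fin n)}
    (hG : TerrainLike G) {a b : Fin n} (hab : a < b)
    (hmin : ∀ u v : Fin n, u < v → G.Adj u v → PairLE (u, v) (a, b) → (u, v) = (a, b)) :
    TerrainLike (G.deleteEdges {s(a, b)}) := by
  intro w x y z hwx hxy hyz hwy hxz
  rw [deleteEdges_singleton_adj_of_lt hab (hwx.trans hxy)] at hwy
  rw [deleteEdges_singleton_adj_of_lt hab (hxy.trans hyz)] at hxz
  rw [deleteEdges_singleton_adj_of_lt hab (hwx.trans (hxy.trans hyz))]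
  refine ⟨hG w x y z hwx hxy hyz hwy.1 hxz.1, ?_⟩
  rintro ⟨rfl, rfl⟩
  exact hxz.2 (hmin x b (hxy.trans hyz) hxz.1 ⟨hwx.le, le_rfl⟩)

open SimpleGraph in
theorem ValidEdgeList.perm_append_of_deleteEdges {n : ℕ} {G : SimpleGraph (Fin n)}
    {a b : Fin n} (hab : a < b) (hadj : G.Adj a b) {l l' : List (Fin n × Fin n)}
    (hl : ValidEdgeList G l) (hl' : ValidEdgeList (G.deleteEdges {s(a, b)}) l') :
    l.Perm (l' ++ [(a, b)]) := by
  have hmem' (e : Fin n × Fin n) : e ∈ l' ↔ e.1 < e.2 ∧ G.Adj e.1 e.2 ∧ e ≠ (a, b) := by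
    rw [hl'.2.1]
    exact and_congr_right (deleteEdges_singleton_adj_of_lt hab)
  have hnd : (l' ++ [(a, b)]).Nodup := by
    rw [← List.concat_eq_append]
    exact hl'.1.concat fun h => ((hmem' _).mp h).2.2 rfl
  refine (List.perm_ext_iff_of_nodup hl.1 hnd).mpr fun e => ?_
  rw [hl.2.1, List.mem_append, List.mem_singleton, hmem']
  by_cases he : e = (a, b)
  · simp [he, hab, hadj]
  · simp [he]

open SimpleGraph in
theorem ValidEdgeList.pairwise_append_of_minimal {n : ℕ} {G : SimpleGraph (Fin n)}
    {a b : Fin n} (hab : a < b)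
    (hmin : ∀ u v : Fin n, u < v → G.Adj u v → PairLE (u, v) (a, b) → (u, v) = (a, b))
    {l' : List (Fin n × Fin n)} (hl' : ValidEdgeList (G.deleteEdges {s(a, b)}) l') :
    (l' ++ [(a, b)]).Pairwise (fun e f => ¬ PairLE e f) := by
  refine List.pairwise_append.mpr ⟨hl'.2.2, List.pairwise_singleton _ _, fun e he f hf hle => ?_⟩
  rw [List.mem_singleton] at hf
  subst hf
  obtain ⟨hlt, hadj⟩ := (hl'.2.1 e).mp he
  rw [deleteEdges_singleton_adj_of_lt hab hlt] at hadj
  exact hadj.2 (hmin e.1 e.2 hlt hadj.1 hle)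

theorem permOfList_eq_of_perm {n : ℕ} {l₁ l₂ : List (Fin n × Fin n)} (hp : l₁.Perm l₂)
    (h₁ : l₁.Pairwise (fun e f => ¬ PairLE e f)) (h₂ : l₂.Pairwise (fun e f => ¬ PairLE e f)) :
    permOfList l₁ = permOfList l₂ := by
  unfold permOfList
  rw [List.prod_map_eq_of_perm_of_pairwise (R := fun e f => ¬ PairLE f e)
    (fun _ _ hfe hef => commute_tau_of_not_pairLE hef hfe)
    ((List.reverse_perm _).trans (hp.trans (List.reverse_perm _).symm))
    (List.pairwise_reverse.mpr h₁) (List.pairwise_reverse.mpr h₂)]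

theorem permOfList_append_singleton {n : ℕ} (l : List (Fin n × Fin n)) (e : Fin n × Fin n) :
    permOfList (l ++ [e]) = tau e * permOfList l := by
  simp [permOfList, mul_assoc]

/-- Deleting a `⪯`-minimal edge `{a,b}` of a terrain-like graph `G` yields a terrain-like
graph `G'` with `Π(G) = (2a, 2b-1)∘Π(G')`. -/
theorem delete_min_edge {n : ℕ} (G : SimpleGraph (Fin n)) (hG : TerrainLike G)
    (a b : Fin n) (hab : a < b) (hadj : G.Adj a b)
    (hmin : ∀ u v : Fin n, u < v → G.Adj u v → PairLE (u, v) (a, b) → (u, v) = (a, b)) :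
    TerrainLike (G.deleteEdges {s(a, b)}) ∧
    ∀ l l' : List (Fin n × Fin n), ValidEdgeList G l →
      ValidEdgeList (G.deleteEdges {s(a, b)}) l' →
      permOfList l = tau (a, b) * permOfList l' := by
  refine ⟨hG.deleteEdges_of_minimal hab hmin, fun l l' hl hl' => ?_⟩
  rw [permOfList_eq_of_perm (hl.perm_append_of_deleteEdges hab hadj hl') hl.2.2
    (hl'.pairwise_append_of_minimal hab hmin), permOfList_append_singleton]
end

section
/- Let G be a terrain-like graph on [n] and {x,y} with x < y a ⪯-minimal edge of G. Then the pair (2x, 2y-1) is in edge configuration in Π(G). -/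
/-!
Since every factor is an involution, `Π(G)⁻¹ = π₀ τ(e₁) ⋯ τ(e_m)`, so we follow the two points
`2x` and `2y - 1` through the transpositions from the right. The edges after `{x,y}` in the list
fix both points: an edge sharing the endpoint `x` (resp. `y`) with the `⪯`-minimal edge `{x,y}`
would be `⪯`-comparable with it. Then `τ({x,y})` swaps the two points, and along the edges before
`{x,y}` the images stay in one of four configurations (`Tracked`), each recording an edge of `G`
enclosing `{x,y}` that no later edge is nested in. The X-property of a terrain-like graph enters
when a transposition would separate the images across such an edge: it provides the enclosing
edge whose transposition, still to come, brings them back. In each configuration that can remain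
at the end, `π₀` maps the images to a pair in edge configuration.
-/

namespace Equiv.Perm

theorem list_prod_apply_eq_self {α : Type*} {L : List (Perm α)} {v : α}
    (h : ∀ σ ∈ L, σ v = v) : L.prod v = v :=
  MulAction.mem_stabilizer_iff.mp <|
    Subgroup.list_prod_mem _ fun σ hσ => MulAction.mem_stabilizer_iff.mpr (h σ hσ)

theorem list_prod_append_cons_apply {α : Type*} (L₁ : List (Perm α)) (σ : Perm α)
    {L₂ : List (Perm α)} {v : α} (h : ∀ τ ∈ L₂, τ v = v) :
    (L₁ ++ σ :: L₂).prod v = L₁.prod (σ v) := by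
  rw [List.prod_append, List.prod_cons, Perm.mul_apply, Perm.mul_apply,
    list_prod_apply_eq_self h]

theorem list_prod_map_apply_of_nodup {ι α : Type*} {f : ι → Perm α} {L : List ι}
    (hL : L.Nodup) {i : ι} (hi : i ∈ L) {v : α}
    (hv : ∀ j ∈ L, j ≠ i → f j v = v) (hw : ∀ j ∈ L, j ≠ i → f j (f i v) = f i v) :
    (L.map f).prod v = f i v := by
  obtain ⟨L₁, L₂, rfl⟩ := List.append_of_mem hi
  have hi' : i ∉ L₁ ∧ i ∉ L₂ := by simpa using (List.nodup_cons.mp (List.nodup_middle.mp hL)).1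
  rw [List.map_append, List.map_cons, list_prod_append_cons_apply, list_prod_apply_eq_self]
  all_goals
    simp only [List.mem_map]
    rintro _ ⟨j, hj, rfl⟩
  · exact hw j (by simp [hj]) (by rintro rfl; exact hi'.1 hj)
  · exact hv j (by simp [hj]) (by rintro rfl; exact hi'.2 hj)

end Equiv.Perm

section

variable {n : ℕ}

/-- `leftSlot a` and `rightSlot b` are the paper's points `2a` and `2b - 1` of `[2n]`, shifted to
`Fin (2 * n)`: `τ({a,b})` swaps them and `π₀` swaps `rightSlot i` with `leftSlot i`. -/
def leftSlot (i : Fin n) : Fin (2 * n) := ⟨2 * i.val + 1, by have := i.isLt; omega⟩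

def rightSlot (i : Fin n) : Fin (2 * n) := ⟨2 * i.val, by have := i.isLt; omega⟩

@[simp] theorem val_leftSlot (i : Fin n) : (leftSlot i).val = 2 * i.val + 1 := rfl

@[simp] theorem val_rightSlot (i : Fin n) : (rightSlot i).val = 2 * i.val := rfl

theorem leftSlot_ne_rightSlot (i j : Fin n) : leftSlot i ≠ rightSlot j := by
  rw [Ne, Fin.ext_iff, val_leftSlot, val_rightSlot]
  omega

theorem leftSlot_injective : Function.Injective (leftSlot (n := n)) := fun i j h => by
  rw [Fin.ext_iff, val_leftSlot, val_leftSlot] at h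
  exact Fin.ext (by omega)

theorem rightSlot_injective : Function.Injective (rightSlot (n := n)) := fun i j h => by
  rw [Fin.ext_iff, val_rightSlot, val_rightSlot] at h
  exact Fin.ext (by omega)

@[simp] theorem tau_apply_leftSlot_self (a b : Fin n) : tau (a, b) (leftSlot a) = rightSlot b :=
  Equiv.swap_apply_left _ _

@[simp] theorem tau_apply_rightSlot_self (a b : Fin n) : tau (a, b) (rightSlot b) = leftSlot a :=
  Equiv.swap_apply_right _ _

theorem tau_apply_leftSlot_of_ne {a i : Fin n} (b : Fin n) (h : i ≠ a) :
    tau (a, b) (leftSlot i) = leftSlot i :=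
  Equiv.swap_apply_of_ne_of_ne (leftSlot_injective.ne h) (leftSlot_ne_rightSlot _ _)

theorem tau_apply_rightSlot_of_ne {b j : Fin n} (a : Fin n) (h : j ≠ b) :
    tau (a, b) (rightSlot j) = rightSlot j :=
  Equiv.swap_apply_of_ne_of_ne (leftSlot_ne_rightSlot _ _).symm (rightSlot_injective.ne h)

theorem pi0_eq_prod : pi0 n = (List.ofFn fun i => Equiv.swap (rightSlot i) (leftSlot i)).prod :=
  rfl

theorem swap_slots_apply_of_ne {a j : Fin n} (h : j ≠ a) {t : Fin (2 * n)}
    (ht : t = rightSlot a ∨ t = leftSlot a) : Equiv.swap (rightSlot j) (leftSlot j) t = t := by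
  rcases ht with rfl | rfl
  · exact Equiv.swap_apply_of_ne_of_ne (rightSlot_injective.ne h.symm)
      (leftSlot_ne_rightSlot _ _).symm
  · exact Equiv.swap_apply_of_ne_of_ne (leftSlot_ne_rightSlot _ _) (leftSlot_injective.ne h.symm)

theorem pi0_apply_of_slot (a : Fin n) {t : Fin (2 * n)} (ht : t = rightSlot a ∨ t = leftSlot a) :
    pi0 n t = Equiv.swap (rightSlot a) (leftSlot a) t := by
  have hswap : Equiv.swap (rightSlot a) (leftSlot a) t = rightSlot a ∨
      Equiv.swap (rightSlot a) (leftSlot a) t = leftSlot a := by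
    rcases ht with rfl | rfl <;> simp
  rw [pi0_eq_prod, List.ofFn_eq_map]
  exact Equiv.Perm.list_prod_map_apply_of_nodup (List.nodup_finRange n) (List.mem_finRange a)
    (fun j _ hj => swap_slots_apply_of_ne hj ht) (fun j _ hj => swap_slots_apply_of_ne hj hswap)

@[simp] theorem pi0_symm_apply_leftSlot (a : Fin n) : (pi0 n).symm (leftSlot a) = rightSlot a := by
  rw [Equiv.symm_apply_eq, pi0_apply_of_slot a (.inl rfl), Equiv.swap_apply_left]

@[simp] theorem pi0_symm_apply_rightSlot (a : Fin n) : (pi0 n).symm (rightSlot a) = leftSlot a := by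
  rw [Equiv.symm_apply_eq, pi0_apply_of_slot a (.inr rfl), Equiv.swap_apply_right]

theorem tau_inv (e : Fin n × Fin n) : (tau e)⁻¹ = tau e :=
  Equiv.swap_inv _ _

theorem permOfList_symm_apply (l : List (Fin n × Fin n)) (t : Fin (2 * n)) :
    (permOfList l).symm t = (pi0 n).symm ((l.map tau).prod t) := by
  have hinv : (l.reverse.map tau).prod⁻¹ = (l.map tau).prod := by
    simp only [List.prod_inv_reverse, List.map_map, Function.comp_def, tau_inv,
      List.map_reverse, List.reverse_reverse]
  rw [← Equiv.Perm.inv_def, permOfList, mul_inv_rev, Equiv.Perm.mul_apply, hinv,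
    Equiv.Perm.inv_def]

theorem edgeConfig_permOfList_iff (l : List (Fin n × Fin n)) (i j : Fin (2 * n)) :
    EdgeConfig (permOfList l) i j ↔
      EdgeConfig (pi0 n) ((l.map tau).prod i) ((l.map tau).prod j) := by
  simp only [EdgeConfig, permOfList_symm_apply]

theorem forall_mem_map_tau_fixes {l : List (Fin n × Fin n)} {i j : Fin n}
    (h : ∀ g ∈ l, g.1 ≠ i ∧ g.2 ≠ j) :
    ∀ σ ∈ l.map tau, σ (leftSlot i) = leftSlot i ∧ σ (rightSlot j) = rightSlot j := by
  simp only [List.mem_map]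
  rintro _ ⟨⟨a, b⟩, hab, rfl⟩
  exact ⟨tau_apply_leftSlot_of_ne b (h _ hab).1.symm, tau_apply_rightSlot_of_ne a (h _ hab).2.symm⟩

theorem PairLE.trans {e f g : Fin n × Fin n} (h₁ : PairLE e f) (h₂ : PairLE f g) : PairLE e g :=
  ⟨h₂.1.trans h₁.1, h₁.2.trans h₂.2⟩

/-- The possible positions of the images `u`, `v` of `rightSlot y`, `leftSlot x` once, of the
edges preceding `(x, y)` in a valid list, all but the initial segment `r` have been applied. -/
inductive Tracked (G : SimpleGraph (Fin n)) (x y : Fin n) (r : List (Fin n × Fin n)) :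
    Fin (2 * n) → Fin (2 * n) → Prop
  | nested {c d : Fin n} (hcx : c ≤ x) (hyd : y ≤ d) (hr : ∀ g ∈ r, ¬PairLE g (c, d)) :
      Tracked G x y r (rightSlot d) (leftSlot c)
  | left {a c d : Fin n} (hac : a < c) (hcx : c ≤ x) (hyd : y ≤ d) (had : G.Adj a d)
      (hr : ∀ g ∈ r, ¬PairLE g (a, d)) : Tracked G x y r (leftSlot a) (leftSlot c)
  | right {c d b : Fin n} (hcx : c ≤ x) (hyd : y ≤ d) (hdb : d < b) (hcb : G.Adj c b)
      (hr : ∀ g ∈ r, ¬PairLE g (c, b)) : Tracked G x y r (rightSlot d) (rightSlot b)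
  | crossed {a c d b : Fin n} (hac : a < c) (hcx : c ≤ x) (hyd : y ≤ d) (had : G.Adj a d)
      (hcb : G.Adj c b) (hrad : ∀ g ∈ r, ¬PairLE g (a, d)) (hrcb : ∀ g ∈ r, ¬PairLE g (c, b))
      (hab : (a, b) ∈ r) : Tracked G x y r (leftSlot a) (rightSlot b)

namespace Tracked

variable {G : SimpleGraph (Fin n)} {x y p q : Fin n} {r : List (Fin n × Fin n)}

theorem tau_nested {c d : Fin n} (hcx : c ≤ x) (hyd : y ≤ d)
    (hr : ∀ g ∈ r, ¬PairLE g (c, d)) (hout : ¬PairLE (p, q) (c, d)) (hpq : G.Adj p q)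
    (hpre : ∀ g ∈ r, ¬PairLE g (p, q)) :
    Tracked G x y r (tau (p, q) (rightSlot d)) (tau (p, q) (leftSlot c)) := by
  rcases eq_or_ne p c with rfl | hpc
  · have hdq : d < q := lt_of_not_ge fun h => hout ⟨le_rfl, h⟩
    rw [tau_apply_rightSlot_of_ne p hdq.ne, tau_apply_leftSlot_self]
    exact .right hcx hyd hdq hpq hpre
  rcases eq_or_ne q d with rfl | hqd
  · have hpc : p < c := lt_of_not_ge fun h => hout ⟨h, le_rfl⟩
    rw [tau_apply_rightSlot_self, tau_apply_leftSlot_of_ne q hpc.ne']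
    exact .left hpc hcx hyd hpq hpre
  rw [tau_apply_rightSlot_of_ne p hqd.symm, tau_apply_leftSlot_of_ne q hpc.symm]
  exact .nested hcx hyd hr

theorem tau_left (hG : TerrainLike G) (hxy : x < y) {a c d : Fin n} (hac : a < c) (hcx : c ≤ x)
    (hyd : y ≤ d) (had : G.Adj a d) (hr : ∀ g ∈ r, ¬PairLE g (a, d))
    (hout : ¬PairLE (p, q) (a, d)) (hpq : G.Adj p q) (hpre : ∀ g ∈ r, ¬PairLE g (p, q))
    (hencl : ∀ i j, i < x → y < j → G.Adj i j → PairLE (p, q) (i, j) → (i, j) ≠ (p, q) →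
      (i, j) ∈ r) :
    Tracked G x y r (tau (p, q) (leftSlot a)) (tau (p, q) (leftSlot c)) := by
  rcases eq_or_ne p a with rfl | hpa
  · have hdq : d < q := lt_of_not_ge fun h => hout ⟨le_rfl, h⟩
    rw [tau_apply_leftSlot_self, tau_apply_leftSlot_of_ne q hac.ne']
    exact .nested hcx (hyd.trans hdq.le) fun g hg h => hpre g hg (h.trans ⟨hac.le, le_rfl⟩)
  rcases eq_or_ne p c with rfl | hpc
  · have hdq : d < q := lt_of_not_ge fun h => hout ⟨hac.le, h⟩
    have haq : G.Adj a q := hG a p d q hac (hcx.trans_lt (hxy.trans_le hyd)) hdq had hpq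
    have hmem : (a, q) ∈ r :=
      hencl a q (hac.trans_le hcx) (hyd.trans_lt hdq) haq ⟨hac.le, le_rfl⟩ (by simp [hac.ne])
    rw [tau_apply_leftSlot_of_ne q hac.ne, tau_apply_leftSlot_self]
    exact .crossed hac hcx hyd had hpq hr hpre hmem
  rw [tau_apply_leftSlot_of_ne q hpa.symm, tau_apply_leftSlot_of_ne q hpc.symm]
  exact .left hac hcx hyd had hr

theorem tau_right (hG : TerrainLike G) (hxy : x < y) {c d b : Fin n} (hcx : c ≤ x) (hyd : y ≤ d)
    (hdb : d < b) (hcb : G.Adj c b) (hr : ∀ g ∈ r, ¬PairLE g (c, b))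
    (hout : ¬PairLE (p, q) (c, b)) (hpq : G.Adj p q) (hpre : ∀ g ∈ r, ¬PairLE g (p, q))
    (hencl : ∀ i j, i < x → y < j → G.Adj i j → PairLE (p, q) (i, j) → (i, j) ≠ (p, q) →
      (i, j) ∈ r) :
    Tracked G x y r (tau (p, q) (rightSlot d)) (tau (p, q) (rightSlot b)) := by
  rcases eq_or_ne q b with rfl | hqb
  · have hpc : p < c := lt_of_not_ge fun h => hout ⟨h, le_rfl⟩
    rw [tau_apply_rightSlot_of_ne p hdb.ne, tau_apply_rightSlot_self]
    exact .nested (hpc.le.trans hcx) hyd fun g hg h => hpre g hg (h.trans ⟨le_rfl, hdb.le⟩)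
  rcases eq_or_ne q d with rfl | hqd
  · have hpc : p < c := lt_of_not_ge fun h => hout ⟨h, hdb.le⟩
    have hpb : G.Adj p b := hG p c q b hpc (hcx.trans_lt (hxy.trans_le hyd)) hdb hpq hcb
    have hmem : (p, b) ∈ r :=
      hencl p b (hpc.trans_le hcx) (hyd.trans_lt hdb) hpb ⟨le_rfl, hdb.le⟩ (by simp [hdb.ne'])
    rw [tau_apply_rightSlot_self, tau_apply_rightSlot_of_ne p hdb.ne']
    exact .crossed hpc hcx hyd hpq hcb hpre hr hmem
  rw [tau_apply_rightSlot_of_ne p hqd.symm, tau_apply_rightSlot_of_ne p hqb.symm]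
  exact .right hcx hyd hdb hcb hr

theorem tau_crossed {a c d b : Fin n} (hac : a < c) (hcx : c ≤ x) (hyd : y ≤ d) (had : G.Adj a d)
    (hcb : G.Adj c b) (hrad : ∀ g ∈ r, ¬PairLE g (a, d)) (hrcb : ∀ g ∈ r, ¬PairLE g (c, b))
    (hab : (a, b) ∈ r ++ [(p, q)]) (hout_ad : ¬PairLE (p, q) (a, d))
    (hout_cb : ¬PairLE (p, q) (c, b)) (hpre : ∀ g ∈ r, ¬PairLE g (p, q)) :
    Tracked G x y r (tau (p, q) (leftSlot a)) (tau (p, q) (rightSlot b)) := by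
  have hab_r (hne : (a, b) ≠ (p, q)) : (a, b) ∈ r := by simpa [hne] using hab
  rcases eq_or_ne p a with rfl | hpa
  · have hdq : d < q := lt_of_not_ge fun h => hout_ad ⟨le_rfl, h⟩
    rcases eq_or_ne q b with rfl | hqb
    · rw [tau_apply_leftSlot_self, tau_apply_rightSlot_self]
      exact .nested (hac.le.trans hcx) (hyd.trans hdq.le) hpre
    have hqb' : q < b := lt_of_not_ge fun h => hpre _ (hab_r (by simp [hqb.symm])) ⟨le_rfl, h⟩
    rw [tau_apply_leftSlot_self, tau_apply_rightSlot_of_ne p hqb.symm]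
    exact .right hcx (hyd.trans hdq.le) hqb' hcb hrcb
  rcases eq_or_ne q b with rfl | hqb
  · have hap : a < p := lt_of_not_ge fun h => hpre _ (hab_r (by simp [hpa.symm])) ⟨h, le_rfl⟩
    have hpc : p < c := lt_of_not_ge fun h => hout_cb ⟨h, le_rfl⟩
    rw [tau_apply_leftSlot_of_ne q hpa.symm, tau_apply_rightSlot_self]
    exact .left hap (hpc.le.trans hcx) hyd had hrad
  rw [tau_apply_leftSlot_of_ne q hpa.symm, tau_apply_rightSlot_of_ne p hqb.symm]
  exact .crossed hac hcx hyd had hcb hrad hrcb (hab_r (by simp [hpa.symm]))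

theorem tau_apply (hG : TerrainLike G) (hxy : x < y) {u v : Fin (2 * n)}
    (h : Tracked G x y (r ++ [(p, q)]) u v) (hpq : G.Adj p q)
    (hpre : ∀ g ∈ r, ¬PairLE g (p, q))
    (hencl : ∀ i j, i < x → y < j → G.Adj i j → PairLE (p, q) (i, j) → (i, j) ≠ (p, q) →
      (i, j) ∈ r) :
    Tracked G x y r (tau (p, q) u) (tau (p, q) v) := by
  have split {s : Fin n × Fin n} (hs : ∀ g ∈ r ++ [(p, q)], ¬PairLE g s) :
      (∀ g ∈ r, ¬PairLE g s) ∧ ¬PairLE (p, q) s :=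
    ⟨fun g hg => hs g (List.mem_append_left _ hg), hs _ (by simp)⟩
  cases h with
  | nested hcx hyd hr =>
    exact tau_nested hcx hyd (split hr).1 (split hr).2 hpq hpre
  | left hac hcx hyd had hr =>
    exact tau_left hG hxy hac hcx hyd had (split hr).1 (split hr).2 hpq hpre hencl
  | right hcx hyd hdb hcb hr =>
    exact tau_right hG hxy hcx hyd hdb hcb (split hr).1 (split hr).2 hpq hpre hencl
  | crossed hac hcx hyd had hcb hrad hrcb hab =>
    exact tau_crossed hac hcx hyd had hcb (split hrad).1 (split hrcb).1 hab (split hrad).2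
      (split hrcb).2 hpre

theorem edgeConfig_pi0 (hxy : x < y) {u v : Fin (2 * n)} (h : Tracked G x y [] u v) :
    EdgeConfig (pi0 n) u v := by
  cases h with
  | nested hcx hyd =>
    have hcd := hcx.trans_lt (hxy.trans_le hyd)
    simp only [EdgeConfig, pi0_symm_apply_leftSlot, pi0_symm_apply_rightSlot, val_leftSlot,
      val_rightSlot]
    omega
  | left hac =>
    simp only [EdgeConfig, pi0_symm_apply_leftSlot, val_rightSlot]
    omega
  | right _ _ hdb =>
    simp only [EdgeConfig, pi0_symm_apply_rightSlot, val_leftSlot]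
    omega
  | crossed _ _ _ _ _ _ _ hab => simp at hab

end Tracked

theorem tracked_of_prefix {G : SimpleGraph (Fin n)} {x y : Fin n} (hG : TerrainLike G)
    (hxy : x < y) {l : List (Fin n × Fin n)} (hadj : ∀ g ∈ l, G.Adj g.1 g.2)
    (hpw : l.Pairwise fun e f => ¬PairLE e f) (hnest : ∀ g ∈ l, ¬PairLE g (x, y))
    (hencl : ∀ i j, i < x → y < j → G.Adj i j → (i, j) ∈ l) :
    Tracked G x y [] ((l.map tau).prod (rightSlot y)) ((l.map tau).prod (leftSlot x)) := by
  suffices ∀ s r, l = r ++ s →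
      Tracked G x y r ((s.map tau).prod (rightSlot y)) ((s.map tau).prod (leftSlot x)) from
    this l [] rfl
  intro s
  induction s with
  | nil =>
    rintro r rfl
    exact .nested le_rfl le_rfl (by simpa using hnest)
  | cons e s ih =>
    rintro r rfl
    obtain ⟨p, q⟩ := e
    obtain ⟨-, hpw_tail, hpw_cross⟩ := List.pairwise_append.mp hpw
    simp only [List.map_cons, List.prod_cons, Equiv.Perm.mul_apply]
    refine (ih (r ++ [(p, q)]) (by simp)).tau_apply hG hxy (hadj (p, q) (by simp))
      (fun g hg => hpw_cross g hg _ List.mem_cons_self) fun a b hax hyb hab hle hne => ?_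
    rcases List.mem_append.mp (hencl a b hax hyb hab) with h | h
    · exact h
    rcases List.mem_cons.mp h with h | h
    · exact absurd h hne
    · exact absurd hle ((List.pairwise_cons.mp hpw_tail).1 _ h)

namespace ValidEdgeList

variable {G : SimpleGraph (Fin n)} {x y : Fin n} {l₁ l₂ : List (Fin n × Fin n)}

theorem not_pairLE_of_mem_left (hl : ValidEdgeList G (l₁ ++ (x, y) :: l₂))
    (hmin : ∀ u v : Fin n, u < v → G.Adj u v → PairLE (u, v) (x, y) → (u, v) = (x, y)) :
    ∀ g ∈ l₁, ¬PairLE g (x, y) := by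
  intro g hg hle
  obtain ⟨hlt, hadj⟩ := (hl.2.1 g).mp (List.mem_append_left _ hg)
  have hxy_notMem : (x, y) ∉ l₁ ++ l₂ := (List.nodup_cons.mp (List.nodup_middle.mp hl.1)).1
  exact hxy_notMem (List.mem_append_left _ (hmin g.1 g.2 hlt hadj hle ▸ hg))

theorem mem_left_of_lt (hl : ValidEdgeList G (l₁ ++ (x, y) :: l₂)) (hxy : x < y) {a b : Fin n}
    (hax : a < x) (hyb : y < b) (hab : G.Adj a b) : (a, b) ∈ l₁ := by
  have hmem := (hl.2.1 (a, b)).mpr ⟨hax.trans (hxy.trans hyb), hab⟩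
  rcases List.mem_append.mp hmem with h | h
  · exact h
  rcases List.mem_cons.mp h with h | h
  · exact absurd (Prod.ext_iff.mp h).1 hax.ne
  · have hnot := (List.pairwise_cons.mp (List.pairwise_append.mp hl.2.2).2.1).1 _ h
    exact absurd ⟨hax.le, hyb.le⟩ hnot

theorem ne_of_mem_right (hl : ValidEdgeList G (l₁ ++ (x, y) :: l₂))
    (hmin : ∀ u v : Fin n, u < v → G.Adj u v → PairLE (u, v) (x, y) → (u, v) = (x, y)) :
    ∀ g ∈ l₂, g.1 ≠ x ∧ g.2 ≠ y := by
  intro g hg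
  obtain ⟨hlt, hadj⟩ := (hl.2.1 g).mp (by simp [hg])
  have hne : g ≠ (x, y) := by
    rintro rfl
    exact (List.nodup_cons.mp (List.nodup_append.mp hl.1).2.1).1 hg
  have hbelow : ¬PairLE g (x, y) := fun h => hne (hmin g.1 g.2 hlt hadj h)
  have habove : ¬PairLE (x, y) g :=
    (List.pairwise_cons.mp (List.pairwise_append.mp hl.2.2).2.1).1 _ hg
  refine ⟨fun h₁ => ?_, fun h₂ => ?_⟩
  · rcases le_total g.2 y with h | h
    exacts [hbelow ⟨h₁.ge, h⟩, habove ⟨h₁.le, h⟩]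
  · rcases le_total x g.1 with h | h
    exacts [hbelow ⟨h, h₂.le⟩, habove ⟨h, h₂.ge⟩]

end ValidEdgeList

end

/-- If `{x,y}` is a `⪯`-minimal edge of the terrain-like graph `G`, then `(2x, 2y-1)` is in
edge configuration in `Π(G)`. -/
theorem edgeConfig_of_min_edge {n : ℕ} (G : SimpleGraph (Fin n))
    (hG : TerrainLike G) (x y : Fin n) (hxy : x < y) (hadj : G.Adj x y)
    (hmin : ∀ u v : Fin n, u < v → G.Adj u v → PairLE (u, v) (x, y) → (u, v) = (x, y)) :
    ∀ l : List (Fin n × Fin n), ValidEdgeList G l →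
      EdgeConfig (permOfList l) ⟨2 * x.val + 1, by have := x.isLt; omega⟩
        ⟨2 * y.val, by have := y.isLt; omega⟩ := by
  intro l hl
  obtain ⟨l₁, l₂, rfl⟩ := List.append_of_mem ((hl.2.1 (x, y)).mpr ⟨hxy, hadj⟩)
  have hfix := forall_mem_map_tau_fixes (hl.ne_of_mem_right hmin)
  have htracked : Tracked G x y [] ((l₁.map tau).prod (rightSlot y))
      ((l₁.map tau).prod (leftSlot x)) :=
    tracked_of_prefix hG hxy (fun g hg => ((hl.2.1 g).mp (by simp [hg])).2)
      (List.pairwise_append.mp hl.2.2).1 (hl.not_pairLE_of_mem_left hmin)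
      fun _ _ => hl.mem_left_of_lt hxy
  change EdgeConfig _ (leftSlot x) (rightSlot y)
  rw [edgeConfig_permOfList_iff, List.map_append, List.map_cons,
    Equiv.Perm.list_prod_append_cons_apply _ _ fun σ hσ => (hfix σ hσ).1,
    Equiv.Perm.list_prod_append_cons_apply _ _ fun σ hσ => (hfix σ hσ).2,
    tau_apply_leftSlot_self, tau_apply_rightSlot_self]
  exact htracked.edgeConfig_pi0 hxy
end
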